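/- There is no infinite sequence of terms t₀, t₁, t₂, … over a finite fixed-arity signature that is 'bad' for homeomorphic embedding, i.e., no infinite sequence such that for all indices i < j, tᵢ is not homeomorphically embedded in tⱼ. (Consequently, any algorithm that only extends its set of approximations with a term in which no previously recorded term is embedded must terminate.) -/

import Mathlib

/-- A term over a fixed-arity signature `(L, a)`: a node labelled `l : L`
together with exactly `a l` child terms (indexed by `Fin (a l)`). -/
inductive Term (L : Type) (a : L → ℕ) : Type where
  | node (l : L) (ts : Fin (a l) → Term L a) : Term L a

/-- The homeomorphic embedding relation `⊴`, the least relation closed under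
diving (`s ⊴ node l ts` whenever `s ⊴ t` for some child `t` of `ts`) and
coupling (`node l ts ⊴ node l ts'` whenever the children embed componentwise). -/
inductive Emb {L : Type} {a : L → ℕ} : Term L a → Term L a → Prop where
  | dive {s : Term L a} {l : L} {ts : Fin (a l) → Term L a} (i : Fin (a l)) :
      Emb s (ts i) → Emb s (Term.node l ts)
  | couple {l : L} {ts ts' : Fin (a l) → Term L a} :
      (∀ i : Fin (a l), Emb (ts i) (ts' i)) →
      Emb (Term.node l ts) (Term.node l ts')

namespace TermAux

variable {L : Type} {a : L → ℕ}

/-- Size of a term. -/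
def size : Term L a → ℕ
  | .node _ ts => (List.ofFn fun i => size (ts i)).sum + 1

/-- Root label of a term. -/
def lab : Term L a → L
  | .node l _ => l

/-- List of children of a term. -/
def children : Term L a → List (Term L a)
  | .node _ ts => List.ofFn ts

theorem size_lt_of_mem_children {t c : Term L a} (h : c ∈ children t) :
    size c < size t := by
  cases t with
  | node l ts =>
    simp only [children, List.mem_ofFn, Set.mem_range] at h
    obtain ⟨i, rfl⟩ := h
    have hmem : size (ts i) ∈ (List.ofFn fun i => size (ts i)) := by
      simp [List.mem_ofFn]
    have := List.single_le_sum (fun x _ => Nat.zero_le x) _ hmem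
    simp only [size]
    omega

theorem Emb.refl : ∀ t : Term L a, Emb t t
  | .node _ ts => Emb.couple fun i => Emb.refl (ts i)

theorem Emb.trans : ∀ {s t u : Term L a}, Emb s t → Emb t u → Emb s u := by
  intro s t u
  induction u generalizing s t with
  | node l ts ih =>
    intro hst htu
    cases htu with
    | dive i h => exact Emb.dive i (ih i hst h)
    | couple h =>
      cases hst with
      | dive j hj => exact Emb.dive j (ih j hj (h j))
      | couple h' => exact Emb.couple fun i => ih i (h' i) (h i)

instance : IsRefl (Term L a) Emb := ⟨Emb.refl⟩
instance : IsTrans (Term L a) Emb := ⟨fun _ _ _ => Emb.trans⟩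
instance : IsPreorder (Term L a) Emb where
  refl := Emb.refl
  trans := fun _ _ _ => Emb.trans

theorem emb_of_mem_children {s c t : Term L a} (hc : c ∈ children t)
    (h : Emb s c) : Emb s t := by
  cases t with
  | node l ts =>
    simp only [children, List.mem_ofFn, Set.mem_range] at hc
    obtain ⟨i, rfl⟩ := hc
    exact Emb.dive i h

theorem emb_of_lab_children {t t' : Term L a} (hl : lab t = lab t')
    (h : List.SublistForall₂ Emb (children t) (children t')) : Emb t t' := by
  cases t with
  | node l ts =>
    cases t' with
    | node l' ts' =>
      simp only [lab] at hl
      subst hl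
      simp only [children] at h
      rw [List.sublistForall₂_iff] at h
      obtain ⟨l₂, h12, hsub⟩ := h
      have hlen : l₂.length = a l := by
        rw [← h12.length_eq]; simp
      have hl₂ : l₂ = List.ofFn ts' := hsub.eq_of_length (by simp [hlen])
      subst hl₂
      apply Emb.couple
      intro i
      have hget := List.forall₂_iff_get.mp h12
      have := hget.2 i.1 (by simp) (by simp)
      simpa [List.get_ofFn] using this

/-- Kruskal's tree theorem for finite fixed-arity signatures: the homeomorphic
embedding is a partial well-order on all terms. -/
theorem term_pwo [Finite L] :
    (Set.univ : Set (Term L a)).PartiallyWellOrderedOn (Emb (a := a)) := by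
  rw [Set.PartiallyWellOrderedOn.iff_not_exists_isMinBadSeq size]
  rintro ⟨f, hf, hmin⟩
  -- The set of all children of terms in the minimal bad sequence.
  set S : Set (Term L a) := {c | ∃ n, c ∈ children (f n)} with hSdef
  -- S is partially well-ordered by the minimality of f.
  have hS : S.PartiallyWellOrderedOn (Emb (a := a)) := by
    rw [Set.PartiallyWellOrderedOn.iff_forall_not_isBadSeq]
    classical
    rintro g ⟨hg1, hg2⟩
    choose idx hidx using hg1
    have hex : ∃ n, ∃ k, idx k = n := ⟨idx 0, 0, rfl⟩
    set N := Nat.find hex with hN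
    obtain ⟨k₀, hk₀⟩ := Nat.find_spec hex
    have hNle : ∀ k, N ≤ idx k := fun k => Nat.find_min' hex ⟨k, rfl⟩
    -- Combined sequence: first N terms of f, then g from k₀ on.
    set h : ℕ → Term L a := fun i => if i < N then f i else g (k₀ + (i - N)) with hhdef
    have hagree : ∀ m, m < N → f m = h m := fun m hm => by simp [hhdef, hm]
    have hhN : h N = g k₀ := by simp [hhdef]
    have hrk : size (h N) < size (f N) := by
      rw [hhN]
      have hfN : f N = f (idx k₀) := by rw [hk₀, ← hN]
      rw [hfN]
      exact size_lt_of_mem_children (hidx k₀)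
    refine hmin N h hagree hrk ⟨fun _ => Set.mem_univ _, ?_⟩
    intro m n hmn hemb
    rcases lt_or_ge m N with hm | hm
    · rcases lt_or_ge n N with hn | hn
      · exact hf.2 m n hmn (by simpa [hhdef, hm, hn] using hemb)
      · -- m < N ≤ n : h n is a child of f (idx _)
        have hn' : ¬ n < N := not_lt.mpr hn
        simp only [hhdef, hm, if_pos, hn', if_neg, not_false_iff] at hemb
        have : Emb (f m) (f (idx (k₀ + (n - N)))) :=
          emb_of_mem_children (hidx _) hemb
        exact hf.2 m _ (lt_of_lt_of_le hm (hNle _)) this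
    · have hm' : ¬ m < N := not_lt.mpr hm
      have hn' : ¬ n < N := not_lt.mpr (le_trans hm hmn.le)
      simp only [hhdef, hm', if_neg, hn', not_false_iff] at hemb
      exact hg2 _ _ (by omega) hemb
  -- Higman's lemma: lists of elements of S are pwo under SublistForall₂.
  have hlist := hS.partiallyWellOrderedOn_sublistForall₂
  -- Pigeonhole on the root labels.
  obtain ⟨l₀, hl₀⟩ := Finite.exists_infinite_fiber (fun n => lab (f n))
  have hinf : (setOf fun n => lab (f n) = l₀).Infinite := by
    rw [← Set.infinite_coe_iff]
    exact hl₀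
  set φ : ℕ → ℕ := Nat.nth (fun n => lab (f n) = l₀) with hφ
  have hφmono : StrictMono φ := Nat.nth_strictMono hinf
  have hφlab : ∀ k, lab (f (φ k)) = l₀ := fun k => Nat.nth_mem_of_infinite hinf k
  -- Apply Higman to the sequence of children lists along φ.
  obtain ⟨m, n, hmn, hemb⟩ :=
    hlist.exists_lt (f := fun k => children (f (φ k)))
      (fun k => by intro x hx; exact ⟨φ k, hx⟩)
  have : Emb (f (φ m)) (f (φ n)) :=
    emb_of_lab_children (by rw [hφlab, hφlab]) hemb
  exact hf.2 _ _ (hφmono hmn) this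

end TermAux

/-- There is no infinite sequence of terms over a finite fixed-arity signature
that is bad for homeomorphic embedding, i.e. no infinite sequence
`t₀, t₁, …` such that for all `i < j`, `tᵢ` is not embedded in `tⱼ`. -/
theorem no_bad_sequence_for_emb {L : Type} [Finite L] (a : L → ℕ) :
    ¬ ∃ t : ℕ → Term L a, ∀ i j : ℕ, i < j → ¬ Emb (t i) (t j) := by
  rintro ⟨t, ht⟩
  obtain ⟨m, n, hmn, hemb⟩ := TermAux.term_pwo.exists_lt (f := t) (fun n => Set.mem_univ _)
  exact ht m n hmn hemb
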